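/- Let F ∈ ℝ^{3×3} have proper singular value decomposition F = USVᵀ with S = diag[s₁,s₂,s₃], s₁ ≥ s₂ ≥ |s₃| ≥ 0, and let c : ℝ³ → ℝ be c(s₁,s₂,s₃) = ∫_{SO(3)} exp(tr(S Q)) dQ. Let θ₁, θ₂, θ₃ ∈ (0, π) be arbitrary rotation angles. Define the sigma points R₀ = UVᵀ and R_i(±θ_i) = U exp(±θ_i ê_i) Vᵀ for i ∈ {1,2,3}, and the weights w_i = (1/(4(1 − cos θ_i))) · [ (1/c(S))(∂c/∂s_i − ∂c/∂s_j − ∂c/∂s_k) + 1 ] for (i,j,k) ∈ 𝓘, and w₀ = 1 − 2(w₁ + w₂ + w₃). Then the weighted first moment of the sigma points equals the first moment of the matrix Fisher distribution: w₀ R₀ + Σ_{i=1}^{3} w_i (R_i(θ_i) + R_i(−θ_i)) = (1/c(F)) ∫_{SO(3)} R · exp(tr(FᵀR)) dR. -/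

import Mathlib

open MeasureTheory Matrix Real

noncomputable section

/-- The space of real 3×3 matrices. -/
abbrev M3 : Type := Matrix (Fin 3) (Fin 3) ℝ

instance : MeasurableSpace M3 := inferInstanceAs (MeasurableSpace (Fin 3 → Fin 3 → ℝ))

/-- The special orthogonal group SO(3), as a set of real 3×3 matrices. -/
def SO3 : Set M3 := {R | Rᵀ * R = 1 ∧ R.det = 1}

/-- The normalizing constant of the matrix Fisher distribution,
`c(F) = ∫_{SO(3)} exp(tr(Fᵀ R)) dR`. -/
noncomputable def mfC (μ : Measure M3) (F : M3) : ℝ :=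
  ∫ R, Real.exp (Fᵀ * R).trace ∂μ

/-- The normalizing constant as a function of the three diagonal parameters:
`c(s₁,s₂,s₃) = ∫_{SO(3)} exp(tr(diag[s₁,s₂,s₃]·Q)) dQ`. -/
noncomputable def cFun (μ : Measure M3) (s : Fin 3 → ℝ) : ℝ :=
  ∫ Q, Real.exp (Matrix.diagonal s * Q).trace ∂μ

/-- The hat map: the skew-symmetric matrix `x̂` satisfying `x̂ y = x × y`. -/
def hat (x : Fin 3 → ℝ) : M3 :=
  !![0, -x 2, x 1; x 2, 0, -x 0; -x 1, x 0, 0]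

/-!
Bi-invariance of `dR` makes the Fisher moments equivariant: for `P, Q ∈ SO(3)` one has
`c(PFQ) = c(F)` and `∫ R exp(tr((PFQ)ᵀR)) dR = P (∫ R exp(tr(FᵀR)) dR) Q`. Conjugating by the
diagonal sign matrices in `SO(3)` shows that for diagonal `S` this moment is diagonal, and
differentiating `c` under the integral sign identifies its diagonal entries with `∂c/∂sₘ`.
Hence the right-hand side is `U diag(∂c/∂sₘ / c) Vᵀ`.

On the other side `êᵢ³ = -êᵢ`, so Rodrigues' formula `exp(θ êᵢ) = I + sin θ êᵢ + (1 - cos θ) êᵢ²`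
gives `exp(θ êᵢ) + exp(-θ êᵢ) = diag(2 cos θ, …, 2, …, 2 cos θ)` (with `2` at `i`), and the
weighted sum of sigma points is `U D Vᵀ` for a diagonal `D` whose entries are linear in the
weights; the weights `wᵢ` are exactly the solution of the resulting linear system.
-/

open scoped Nat

section Rodrigues

variable {𝔸 : Type*} [NormedRing 𝔸] [NormedAlgebra ℝ 𝔸] {a : 𝔸}

theorem pow_two_mul_add_one_of_pow_three (ha : a ^ 3 = -a) (k : ℕ) :
    a ^ (2 * k + 1) = (-1 : ℝ) ^ k • a := by
  induction k with
  | zero => simp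
  | succ k ih =>
    rw [show 2 * (k + 1) + 1 = 2 * k + 1 + 2 by ring, pow_add, ih, smul_mul_assoc, ← pow_succ',
      ha, pow_succ, mul_neg_one, smul_neg, neg_smul]

theorem pow_two_mul_add_two_of_pow_three (ha : a ^ 3 = -a) (k : ℕ) :
    a ^ (2 * k + 2) = (-1 : ℝ) ^ k • a ^ 2 := by
  rw [pow_succ, pow_two_mul_add_one_of_pow_three ha, smul_mul_assoc, sq]

variable [CompleteSpace 𝔸]

theorem exp_smul_of_pow_three (ha : a ^ 3 = -a) (t : ℝ) :
    NormedSpace.exp (t • a) = 1 + Real.sin t • a + (1 - Real.cos t) • a ^ 2 := by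
  have hodd : HasSum (fun k => ((2 * k + 1)! : ℝ)⁻¹ • (t • a) ^ (2 * k + 1)) (Real.sin t • a) := by
    refine ((Real.hasSum_sin t).smul_const a).congr_fun fun k => ?_
    rw [smul_pow, pow_two_mul_add_one_of_pow_three ha, smul_smul, smul_smul]
    ring_nf
  have hcos : HasSum (fun k => -((-1 : ℝ) ^ (k + 1) * t ^ (2 * (k + 1)) / (2 * (k + 1))!))
      (1 - Real.cos t) := by
    have := (hasSum_nat_add_iff' 1).mpr (Real.hasSum_cos t)
    simpa using this.neg
  have heven : HasSum (fun k => ((2 * k)! : ℝ)⁻¹ • (t • a) ^ (2 * k))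
      (1 + (1 - Real.cos t) • a ^ 2) := by
    refine (hasSum_nat_add_iff' 1).mp ?_
    simp only [Finset.range_one, Finset.sum_singleton, mul_zero, pow_zero, Nat.factorial_zero,
      Nat.cast_one, inv_one, one_smul, add_sub_cancel_left]
    refine (hcos.smul_const (a ^ 2)).congr_fun fun k => ?_
    rw [smul_pow, mul_add, mul_one, pow_two_mul_add_two_of_pow_three ha, smul_smul, smul_smul]
    congr 1
    ring
  rw [add_right_comm]
  exact (NormedSpace.exp_series_hasSum_exp' (t • a)).unique (heven.even_add_odd hodd)

end Rodrigues

theorem hat_single_sq (i : Fin 3) :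
    hat (Pi.single i 1) ^ 2 = diagonal fun m => if m = i then 0 else -1 := by
  fin_cases i <;> ext a b <;> fin_cases a <;> fin_cases b <;>
    simp [sq, hat, Matrix.mul_apply, Fin.sum_univ_three]

theorem hat_single_pow_three (i : Fin 3) : hat (Pi.single i 1) ^ 3 = -hat (Pi.single i 1) := by
  fin_cases i <;> ext a b <;> fin_cases a <;> fin_cases b <;>
    simp [pow_succ, hat, Matrix.mul_apply, Fin.sum_univ_three]

theorem exp_smul_hat_single_add_exp_neg_smul (i : Fin 3) (t : ℝ) :
    NormedSpace.exp (t • hat (Pi.single i 1)) + NormedSpace.exp ((-t) • hat (Pi.single i 1)) =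
      diagonal fun m => if m = i then 2 else 2 * Real.cos t := by
  have rodrigues (τ : ℝ) : NormedSpace.exp (τ • hat (Pi.single i 1)) =
      1 + Real.sin τ • hat (Pi.single i 1) + (1 - Real.cos τ) • hat (Pi.single i 1) ^ 2 := by
    let : NormedRing M3 := Matrix.linftyOpNormedRing
    let : NormedAlgebra ℝ M3 := Matrix.linftyOpNormedAlgebra
    exact exp_smul_of_pow_three (hat_single_pow_three i) τ
  rw [rodrigues, rodrigues, hat_single_sq, Real.sin_neg, Real.cos_neg]
  ext a b
  by_cases hab : a = b
  · subst hab
    by_cases hai : a = i <;> simp [hai] <;> ring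
  · simp [hab]

theorem sigmaPoints_weighted_sum (U V : M3) (w₀ : ℝ) (w θ : Fin 3 → ℝ) :
    w₀ • (U * Vᵀ) +
        ∑ i : Fin 3,
          w i • (U * NormedSpace.exp (θ i • hat (Pi.single i 1)) * Vᵀ +
            U * NormedSpace.exp ((-θ i) • hat (Pi.single i 1)) * Vᵀ) =
      U * diagonal (fun m => w₀ + ∑ i, w i * if m = i then 2 else 2 * Real.cos (θ i)) * Vᵀ := by
  have hdiag : (diagonal fun m => w₀ + ∑ i, w i * if m = i then 2 else 2 * Real.cos (θ i)) =
      w₀ • 1 + ∑ i, w i • (NormedSpace.exp (θ i • hat (Pi.single i 1)) +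
        NormedSpace.exp ((-θ i) • hat (Pi.single i 1))) := by
    simp only [exp_smul_hat_single_add_exp_neg_smul]
    ext a b
    by_cases hab : a = b
    · simp [hab, Matrix.sum_apply]
    · simp [hab, Matrix.sum_apply, one_apply_ne hab]
  simp only [hdiag, Matrix.mul_add, Matrix.add_mul, Matrix.mul_sum, Matrix.sum_mul, Matrix.mul_smul,
    Matrix.smul_mul, Matrix.mul_one]

theorem sigmaPoints_coeff_eq {c w₀ : ℝ} {d w θ : Fin 3 → ℝ}
    (hw : ∀ i, w i * (1 - Real.cos (θ i)) = ((1 / c) * (d i - d (i + 1) - d (i + 2)) + 1) / 4)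
    (hw₀ : w₀ = 1 - 2 * (w 0 + w 1 + w 2)) (m : Fin 3) :
    w₀ + ∑ i, w i * (if m = i then 2 else 2 * Real.cos (θ i)) = (1 / c) * d m := by
  have h0 := hw 0
  have h1 := hw 1
  have h2 := hw 2
  simp only [Fin.isValue, Fin.reduceAdd] at h0 h1 h2
  fin_cases m <;>
    simp only [hw₀, Fin.sum_univ_three, Fin.isValue, Fin.zero_eta, Fin.mk_one, Fin.reduceFinMk,
      Fin.reduceEq, mul_ite, ↓reduceIte, one_div]
  · linear_combination (-2 : ℝ) * h1 - 2 * h2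
  · linear_combination (-2 : ℝ) * h0 - 2 * h2
  · linear_combination (-2 : ℝ) * h0 - 2 * h1

instance : BorelSpace M3 := inferInstanceAs (BorelSpace (Fin 3 → Fin 3 → ℝ))

theorem transpose_mem_SO3 {R : M3} (hR : R ∈ SO3) : Rᵀ ∈ SO3 :=
  ⟨by rw [transpose_transpose]; exact mul_eq_one_comm.mp hR.1, by rw [det_transpose]; exact hR.2⟩

theorem abs_apply_le_one_of_mem_SO3 {R : M3} (hR : R ∈ SO3) (a b : Fin 3) : |R a b| ≤ 1 := by
  have hcol : ∑ k, R k b ^ 2 = 1 := by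
    simpa [Matrix.mul_apply, sq] using congrFun (congrFun hR.1 b) b
  have : R a b ^ 2 ≤ 1 :=
    hcol ▸ Finset.single_le_sum (fun k _ => sq_nonneg (R k b)) (Finset.mem_univ a)
  exact (sq_le_one_iff_abs_le_one _).mp this

theorem isCompact_SO3 : IsCompact SO3 := by
  have hclosed : IsClosed SO3 :=
    (isClosed_eq (by fun_prop) continuous_const).inter (isClosed_eq (by fun_prop) continuous_const)
  refine (isCompact_univ_pi fun _ => isCompact_univ_pi fun _ => isCompact_Icc).of_isClosed_subset
    hclosed fun R hR a _ b _ => abs_le.mp (abs_apply_le_one_of_mem_SO3 hR a b)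

theorem diagonal_sign_mem_SO3 (p : Fin 3) :
    diagonal (fun m => if m = p then 1 else -1 : Fin 3 → ℝ) ∈ SO3 := by
  refine ⟨?_, ?_⟩
  · rw [diagonal_transpose, diagonal_mul_diagonal, ← diagonal_one]
    congr 1; funext m; split_ifs <;> norm_num
  · fin_cases p <;> simp [det_diagonal, Fin.prod_univ_three]

theorem mul_mul_apply_eq_sum_sum (A B C : M3) (i j : Fin 3) :
    (A * B * C) i j = ∑ p, ∑ q, A i p * B p q * C q j := by
  simp only [Matrix.mul_apply, Finset.sum_mul]
  exact Finset.sum_comm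

/-- `c(F) · E[R]` for `R ∼ 𝓜(F)`. -/
def mfMoment (μ : Measure M3) (F : M3) : M3 :=
  Matrix.of fun a b => ∫ R, Real.exp (Fᵀ * R).trace * R a b ∂μ

theorem trace_transpose_mul_mul_mul {P Q : M3} (hP : P ∈ SO3) (hQ : Q ∈ SO3) (F R : M3) :
    ((P * F * Q)ᵀ * (P * R * Q)).trace = (Fᵀ * R).trace := by
  have hPP : Pᵀ * P = 1 := hP.1
  have hQQ : Q * Qᵀ = 1 := mul_eq_one_comm.mp hQ.1
  calc ((P * F * Q)ᵀ * (P * R * Q)).trace = (Qᵀ * (Fᵀ * (Pᵀ * P) * R) * Q).trace := by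
        simp only [transpose_mul, Matrix.mul_assoc]
    _ = (Q * Qᵀ * (Fᵀ * R)).trace := by
        rw [hPP, Matrix.mul_one, trace_mul_comm, Matrix.mul_assoc]
    _ = (Fᵀ * R).trace := by rw [hQQ, Matrix.one_mul]

theorem mfC_diagonal (μ : Measure M3) (s : Fin 3 → ℝ) : mfC μ (diagonal s) = cFun μ s := by
  rw [mfC, cFun, diagonal_transpose]

def diagPairing (R : M3) : (Fin 3 → ℝ) →L[ℝ] ℝ :=
  ∑ j, R j j • ContinuousLinearMap.proj j

theorem diagPairing_apply (R : M3) (x : Fin 3 → ℝ) :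
    diagPairing R x = (diagonal x * R).trace := by
  simp [diagPairing, trace, mul_comm]

@[fun_prop]
theorem continuous_diagPairing : Continuous diagPairing := by
  unfold diagPairing; fun_prop

section Haar

variable {μ : Measure M3}

theorem integral_comp_mul_mul (hleft : ∀ Q ∈ SO3, μ.map (fun R => Q * R) = μ)
    (hright : ∀ Q ∈ SO3, μ.map (fun R => R * Q) = μ) {P Q : M3} (hP : P ∈ SO3) (hQ : Q ∈ SO3)
    {E : Type*} [NormedAddCommGroup E] [NormedSpace ℝ E] {f : M3 → E}
    (hf : AEStronglyMeasurable f μ) :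
    ∫ R, f (P * R * Q) ∂μ = ∫ R, f R ∂μ := by
  have hmap : μ.map (fun R => P * R * Q) = μ := by
    have := Measure.map_map (μ := μ) (f := fun R => P * R) (g := fun R => R * Q)
      (by fun_prop) (by fun_prop)
    rwa [hleft P hP, hright Q hQ, eq_comm] at this
  rw [← integral_map (by fun_prop) (by rwa [hmap]), hmap]

theorem mfC_mul_mul (hleft : ∀ Q ∈ SO3, μ.map (fun R => Q * R) = μ)
    (hright : ∀ Q ∈ SO3, μ.map (fun R => R * Q) = μ) {P Q : M3} (hP : P ∈ SO3) (hQ : Q ∈ SO3)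
    (F : M3) : mfC μ (P * F * Q) = mfC μ F := by
  have h := integral_comp_mul_mul hleft hright hP hQ
    (f := fun R => Real.exp ((P * F * Q)ᵀ * R).trace) (Continuous.aestronglyMeasurable (by fun_prop))
  simp only [trace_transpose_mul_mul_mul hP hQ] at h
  exact h.symm

variable [IsFiniteMeasure μ]

theorem integrable_of_continuous (hsupp : μ SO3ᶜ = 0) {E : Type*} [NormedAddCommGroup E]
    {f : M3 → E} (hf : Continuous f) : Integrable f μ := by
  rw [← Measure.restrict_eq_self_of_ae_mem (s := SO3) hsupp]
  exact hf.continuousOn.integrableOn_compact isCompact_SO3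

theorem mfMoment_mul_mul (hsupp : μ SO3ᶜ = 0)
    (hleft : ∀ Q ∈ SO3, μ.map (fun R => Q * R) = μ)
    (hright : ∀ Q ∈ SO3, μ.map (fun R => R * Q) = μ) {P Q : M3} (hP : P ∈ SO3) (hQ : Q ∈ SO3)
    (F : M3) : mfMoment μ (P * F * Q) = P * mfMoment μ F * Q := by
  ext a b
  rw [mul_mul_apply_eq_sum_sum]
  have h := integral_comp_mul_mul hleft hright hP hQ
    (f := fun R => Real.exp ((P * F * Q)ᵀ * R).trace * R a b)
    (Continuous.aestronglyMeasurable (by fun_prop))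
  simp only [trace_transpose_mul_mul_mul hP hQ, mul_mul_apply_eq_sum_sum, Finset.mul_sum] at h
  rw [mfMoment, of_apply, ← h,
    integral_finsetSum _ fun p _ => integrable_of_continuous hsupp (by fun_prop)]
  refine Finset.sum_congr rfl fun p _ => ?_
  rw [integral_finsetSum _ fun q _ => integrable_of_continuous hsupp (by fun_prop)]
  refine Finset.sum_congr rfl fun q _ => ?_
  rw [mfMoment, of_apply, ← integral_const_mul, ← integral_mul_const]
  congr 1; funext R; ring

theorem mfMoment_diagonal_apply_of_ne (hsupp : μ SO3ᶜ = 0)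
    (hleft : ∀ Q ∈ SO3, μ.map (fun R => Q * R) = μ)
    (hright : ∀ Q ∈ SO3, μ.map (fun R => R * Q) = μ) (s : Fin 3 → ℝ) {p q : Fin 3}
    (hpq : p ≠ q) : mfMoment μ (diagonal s) p q = 0 := by
  set ε : Fin 3 → ℝ := fun m => if m = p then 1 else -1
  have hD := diagonal_sign_mem_SO3 p
  have hfix : diagonal ε * diagonal s * diagonal ε = diagonal s := by
    rw [diagonal_mul_diagonal, diagonal_mul_diagonal]
    congr 1; funext m; simp only [ε]; split_ifs <;> ring
  -- conjugating by `diag ε` flips the sign of the `(p, q)` entry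
  have h := congrFun (congrFun (mfMoment_mul_mul hsupp hleft hright hD hD (diagonal s)) p) q
  rw [hfix, mul_diagonal, diagonal_mul] at h
  simp only [↓reduceIte, hpq.symm, one_mul, mul_neg, mul_one] at h
  linarith

theorem hasFDerivAt_cFun (hsupp : μ SO3ᶜ = 0) (s : Fin 3 → ℝ) :
    HasFDerivAt (cFun μ) (∫ R, Real.exp (diagPairing R s) • diagPairing R ∂μ) s := by
  have hcFun : cFun μ = fun x => ∫ R, Real.exp (diagPairing R x) ∂μ := by
    funext x; simp only [cFun, diagPairing_apply]
  have hcont : Continuous fun xR : (Fin 3 → ℝ) × M3 =>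
      Real.exp (diagPairing xR.2 xR.1) • diagPairing xR.2 := by
    fun_prop
  -- domination: the derivative is continuous, hence bounded on `closedBall s 1 ×ˢ SO3`
  obtain ⟨C, hC⟩ := ((isCompact_closedBall s 1).prod isCompact_SO3).exists_bound_of_continuousOn
    hcont.continuousOn
  rw [hcFun]
  refine hasFDerivAt_integral_of_dominated_of_fderiv_le (bound := fun _ => C)
    (F' := fun x R => Real.exp (diagPairing R x) • diagPairing R)
    (Metric.ball_mem_nhds s one_pos) (.of_forall fun x => Continuous.aestronglyMeasurable ?_)
    (integrable_of_continuous hsupp ?_) (Continuous.aestronglyMeasurable ?_) ?_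
    (integrable_const C) (.of_forall fun R x _ => ?_)
  · fun_prop
  · fun_prop
  · fun_prop
  · filter_upwards [show ∀ᵐ R ∂μ, R ∈ SO3 from hsupp] with R hR x hx
    exact hC (x, R) ⟨Metric.ball_subset_closedBall hx, hR⟩
  · exact (diagPairing R).hasFDerivAt.exp

theorem fderiv_cFun_apply_single (hsupp : μ SO3ᶜ = 0) (s : Fin 3 → ℝ) (m : Fin 3) :
    fderiv ℝ (cFun μ) s (Pi.single m 1) = mfMoment μ (diagonal s) m m := by
  have hint : Integrable (fun R => Real.exp (diagPairing R s) • diagPairing R) μ :=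
    integrable_of_continuous hsupp (by fun_prop)
  rw [(hasFDerivAt_cFun hsupp s).fderiv, ContinuousLinearMap.integral_apply hint]
  simp [mfMoment, diagPairing_apply, diagonal_transpose, trace, Matrix.diagonal_mul, Pi.single_apply]

theorem mfMoment_diagonal (hsupp : μ SO3ᶜ = 0)
    (hleft : ∀ Q ∈ SO3, μ.map (fun R => Q * R) = μ)
    (hright : ∀ Q ∈ SO3, μ.map (fun R => R * Q) = μ) (s : Fin 3 → ℝ) :
    mfMoment μ (diagonal s) = diagonal fun m => fderiv ℝ (cFun μ) s (Pi.single m 1) := by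
  ext p q
  by_cases hpq : p = q
  · rw [hpq, diagonal_apply_eq, fderiv_cFun_apply_single hsupp]
  · rw [diagonal_apply_ne _ hpq, mfMoment_diagonal_apply_of_ne hsupp hleft hright s hpq]

end Haar

theorem matrixFisher_unscented_moment_match_general
    (μ : Measure M3) [IsProbabilityMeasure μ] (hsupp : μ SO3ᶜ = 0)
    (hleft : ∀ Q ∈ SO3, μ.map (fun R => Q * R) = μ)
    (hright : ∀ Q ∈ SO3, μ.map (fun R => R * Q) = μ)
    (F U V : M3) (s₁ s₂ s₃ : ℝ)
    (hU : U ∈ SO3) (hV : V ∈ SO3)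
    (hF : F = U * Matrix.diagonal ![s₁, s₂, s₃] * Vᵀ)
    (θ : Fin 3 → ℝ) (hθ : ∀ i, θ i ∈ Set.Ioo (0 : ℝ) Real.pi)
    (d : Fin 3 → ℝ)
    (hd : ∀ m, d m = fderiv ℝ (cFun μ) ![s₁, s₂, s₃] (Pi.single m 1))
    (w : Fin 3 → ℝ)
    (hw : ∀ i : Fin 3, w i =
      (1 / (4 * (1 - Real.cos (θ i)))) *
        ((1 / cFun μ ![s₁, s₂, s₃]) * (d i - d (i + 1) - d (i + 2)) + 1))
    (w₀ : ℝ) (hw₀ : w₀ = 1 - 2 * (w 0 + w 1 + w 2)) :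
    w₀ • (U * Vᵀ) +
        ∑ i : Fin 3,
          w i • (U * NormedSpace.exp (θ i • hat (Pi.single i 1)) * Vᵀ +
            U * NormedSpace.exp ((-θ i) • hat (Pi.single i 1)) * Vᵀ) =
      Matrix.of fun a b : Fin 3 =>
        (1 / mfC μ F) * ∫ R, Real.exp (Fᵀ * R).trace * R a b ∂μ := by
  set s : Fin 3 → ℝ := ![s₁, s₂, s₃]
  have hVt := transpose_mem_SO3 hV
  have hc : mfC μ F = cFun μ s := by rw [hF, mfC_mul_mul hleft hright hU hVt, mfC_diagonal]
  have hmoment : mfMoment μ F = U * diagonal d * Vᵀ := by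
    rw [hF, mfMoment_mul_mul hsupp hleft hright hU hVt, mfMoment_diagonal hsupp hleft hright]
    simp only [← hd]
  have hw' (i : Fin 3) : w i * (1 - Real.cos (θ i)) =
      ((1 / cFun μ s) * (d i - d (i + 1) - d (i + 2)) + 1) / 4 := by
    obtain ⟨hθ0, hθπ⟩ := hθ i
    have hcos : Real.cos (θ i) ≠ 1 := fun h => hθ0.ne' <|
      (Real.cos_eq_one_iff_of_lt_of_lt (by linarith) (by linarith [Real.pi_pos])).mp h
    rw [hw i]
    field_simp [sub_ne_zero.mpr hcos.symm]
  calc _ = U * diagonal (fun m => (1 / cFun μ s) * d m) * Vᵀ := by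
        rw [sigmaPoints_weighted_sum]
        simp only [sigmaPoints_coeff_eq hw' hw₀]
    _ = (1 / mfC μ F) • mfMoment μ F := by
        rw [hmoment, hc, ← Matrix.smul_mul, ← Matrix.mul_smul, ← diagonal_smul]
        rfl
    _ = _ := rfl

/-- Moment matching of the unscented transform of the matrix
Fisher distribution.  Let `F = U S Vᵀ` be a proper singular value decomposition
with `s₁ ≥ s₂ ≥ |s₃| ≥ 0`, let `θ₁, θ₂, θ₃ ∈ (0,π)` be arbitrary, define the sigma
points `R₀ = UVᵀ`, `Rᵢ(±θᵢ) = U exp(±θᵢ êᵢ) Vᵀ`, and the weights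
`wᵢ = (1/(4(1−cos θᵢ)))·[(1/c(S))(∂c/∂sᵢ − ∂c/∂sⱼ − ∂c/∂sₖ) + 1]` for cyclic
`(i,j,k)`, `w₀ = 1 − 2(w₁+w₂+w₃)`.  Then the weighted first moment of the sigma
points equals the first moment of `𝓜(F)`:
`w₀R₀ + Σᵢ wᵢ(Rᵢ(θᵢ) + Rᵢ(−θᵢ)) = (1/c(F)) ∫_{SO(3)} R·exp(tr(FᵀR)) dR`. -/
theorem matrixFisher_unscented_moment_match
    (μ : Measure M3) [IsProbabilityMeasure μ] (hsupp : μ SO3ᶜ = 0)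
    (hleft : ∀ Q ∈ SO3, μ.map (fun R => Q * R) = μ)
    (hright : ∀ Q ∈ SO3, μ.map (fun R => R * Q) = μ)
    (F U V : M3) (s₁ s₂ s₃ : ℝ)
    (hU : U ∈ SO3) (hV : V ∈ SO3) (h12 : s₁ ≥ s₂) (h23 : s₂ ≥ |s₃|)
    (hF : F = U * Matrix.diagonal ![s₁, s₂, s₃] * Vᵀ)
    (θ : Fin 3 → ℝ) (hθ : ∀ i, θ i ∈ Set.Ioo (0 : ℝ) Real.pi)
    (d : Fin 3 → ℝ)
    (hd : ∀ m, d m = fderiv ℝ (cFun μ) ![s₁, s₂, s₃] (Pi.single m 1))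
    (w : Fin 3 → ℝ)
    (hw : ∀ i : Fin 3, w i =
      (1 / (4 * (1 - Real.cos (θ i)))) *
        ((1 / cFun μ ![s₁, s₂, s₃]) * (d i - d (i + 1) - d (i + 2)) + 1))
    (w₀ : ℝ) (hw₀ : w₀ = 1 - 2 * (w 0 + w 1 + w 2)) :
    w₀ • (U * Vᵀ) +
        ∑ i : Fin 3,
          w i • (U * NormedSpace.exp (θ i • hat (Pi.single i 1)) * Vᵀ +
            U * NormedSpace.exp ((-θ i) • hat (Pi.single i 1)) * Vᵀ) =
      Matrix.of fun a b : Fin 3 =>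
        (1 / mfC μ F) * ∫ R, Real.exp (Fᵀ * R).trace * R a b ∂μ :=
  matrixFisher_unscented_moment_match_general μ hsupp hleft hright F U V s₁ s₂ s₃ hU hV hF θ hθ d hd
    w hw w₀ hw₀

end
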